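/- For fixed q ∈ ℂ and α ∈ (0,1], there is a constant C(q,η) > 0 such that for every A in a compact set S ⊂ GL(d,ℝ) with uniform bound η on ‖A‖ and ‖A⁻¹‖, the twisted composition operator K_{q,A} defined by (K_{q,A}f)(x) = e^{q·ln‖Ax‖} f(Ax/‖Ax‖) maps C^α(𝕊^{d-1}) to itself and satisfies ‖K_{q,A}f‖_{C^α} ≤ C(q,η) ‖f‖_{C^α} for all f ∈ C^α(𝕊^{d-1}). -/

import Mathlib

open MeasureTheory
open scoped ENNReal NNReal

/-- The sup-norm over the unit sphere, valued in `ℝ≥0∞`. -/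
noncomputable def supNormSphere {d : ℕ} (f : EuclideanSpace ℝ (Fin d) → ℂ) : ℝ≥0∞ :=
  ⨆ (x : EuclideanSpace ℝ (Fin d)) (_ : ‖x‖ = 1), (‖f x‖₊ : ℝ≥0∞)

/-- The `α`-Hölder seminorm `[f]_α = sup_{x ≠ y} |f x − f y| / ‖x − y‖^α` over the unit
sphere, valued in `ℝ≥0∞`. -/
noncomputable def holderSeminormSphere {d : ℕ} (α : ℝ) (f : EuclideanSpace ℝ (Fin d) → ℂ) :
    ℝ≥0∞ :=
  ⨆ (x : EuclideanSpace ℝ (Fin d)) (y : EuclideanSpace ℝ (Fin d)) (_ : ‖x‖ = 1)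
    (_ : ‖y‖ = 1) (_ : x ≠ y), (‖f x - f y‖₊ : ℝ≥0∞) / edist x y ^ α

/-- The Hölder norm `‖f‖_{C^α} = ‖f‖_∞ + [f]_α` on the unit sphere. -/
noncomputable def holderNormSphere {d : ℕ} (α : ℝ) (f : EuclideanSpace ℝ (Fin d) → ℂ) :
    ℝ≥0∞ :=
  supNormSphere f + holderSeminormSphere α f

/-- The twisted composition operator `(K_{q,A} f)(x) = e^{q ln‖Ax‖} f(Ax/‖Ax‖)`. -/
noncomputable def twistKernel {d : ℕ} (q : ℂ)
    (A : EuclideanSpace ℝ (Fin d) →L[ℝ] EuclideanSpace ℝ (Fin d))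
    (f : EuclideanSpace ℝ (Fin d) → ℂ) : EuclideanSpace ℝ (Fin d) → ℂ :=
  fun x => Complex.exp (q * (Real.log ‖A x‖ : ℂ)) * f (‖A x‖⁻¹ • A x)

/-!
`K_{q,A} f` is the product of the multiplier `e^{q ln‖Ax‖}` with `f ∘ (x ↦ Ax/‖Ax‖)`.
The `C^α` norm on the sphere is submultiplicative, and precomposition with an `L`-Lipschitz
self-map of the sphere (`L ≥ 1`) multiplies it by at most `L^α`. Since `η⁻¹ ≤ ‖Ax‖ ≤ η` on the
sphere, the multiplier is bounded by `η^{|Re q|}` and is Lipschitz (`log` is `η`-Lipschitz on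
`[η⁻¹, ∞)`, `exp` is `e^c`-Lipschitz on `{Re z ≤ c}`), while `x ↦ Ax/‖Ax‖` is `2η²`-Lipschitz.
A Lipschitz function on the sphere is `α`-Hölder because the sphere has diameter `2`, so every
constant depends on `q`, `α` and `η` only.
-/

open Metric Set

lemma Real.lipschitzOnWith_log {m : ℝ≥0} (hm : 0 < m) :
    LipschitzOnWith m⁻¹ Real.log (Ici (m : ℝ)) := by
  refine (convex_Ici _).lipschitzOnWith_of_nnnorm_hasDerivWithin_le
    (fun x (hx : (m : ℝ) ≤ x) =>
      (Real.hasDerivAt_log (lt_of_lt_of_le (NNReal.coe_pos.2 hm) hx).ne').hasDerivWithinAt)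
    fun x (hx : (m : ℝ) ≤ x) => ?_
  rw [← NNReal.coe_le_coe, coe_nnnorm, Real.norm_eq_abs, abs_inv, NNReal.coe_inv,
    abs_of_pos (lt_of_lt_of_le hm hx)]
  exact inv_anti₀ hm hx

lemma Complex.lipschitzOnWith_exp (c : ℝ) :
    LipschitzOnWith (Real.exp c).toNNReal Complex.exp {z : ℂ | z.re ≤ c} :=
  (convex_halfSpace_re_le c).lipschitzOnWith_of_nnnorm_hasDerivWithin_le
    (fun z _ => (Complex.hasDerivAt_exp z).hasDerivWithinAt)
    fun z (hz : z.re ≤ c) => by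
      rw [← NNReal.coe_le_coe, coe_nnnorm, Complex.norm_exp,
        Real.coe_toNNReal _ (Real.exp_pos c).le]
      exact Real.exp_le_exp.2 hz

lemma lipschitzWith_mul_ofReal (q : ℂ) : LipschitzWith ‖q‖₊ fun t : ℝ => q * t :=
  LipschitzWith.of_dist_le_mul fun s t => by
    rw [dist_eq_norm, dist_eq_norm, ← mul_sub, ← Complex.ofReal_sub, norm_mul,
      Complex.norm_real, coe_nnnorm]

lemma abs_log_le_log_of_inv_le_of_le {η t : ℝ} (hη : 0 < η) (h₁ : η⁻¹ ≤ t) (h₂ : t ≤ η) :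
    |Real.log t| ≤ Real.log η := by
  have ht : 0 < t := lt_of_lt_of_le (inv_pos.2 hη) h₁
  refine abs_le.2 ⟨?_, Real.log_le_log ht h₂⟩
  rw [← Real.log_inv]
  exact Real.log_le_log (inv_pos.2 hη) h₁

namespace NormedSpace

variable {V : Type*} [NormedAddCommGroup V] [NormedSpace ℝ V]

lemma lipschitzOnWith_normalize {m : ℝ≥0} (hm : 0 < m) :
    LipschitzOnWith (2 / m) normalize {x : V | (m : ℝ) ≤ ‖x‖} := by
  rw [lipschitzOnWith_iff_norm_sub_le]
  intro x (hx : (m : ℝ) ≤ ‖x‖) y (hy : (m : ℝ) ≤ ‖y‖)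
  have hx0 : 0 < ‖x‖ := lt_of_lt_of_le hm hx
  have hy0 : y ≠ 0 := norm_pos_iff.1 (lt_of_lt_of_le hm hy)
  have hsplit : normalize x - normalize y = ‖x‖⁻¹ • ((x - y) + (‖y‖ - ‖x‖) • normalize y) := by
    simp only [normalize, smul_add, smul_sub, smul_smul]
    have hcoeff : ‖x‖⁻¹ * ((‖y‖ - ‖x‖) * ‖y‖⁻¹) = ‖x‖⁻¹ - ‖y‖⁻¹ := by
      field_simp
    rw [hcoeff, sub_smul]
    abel
  calc ‖normalize x - normalize y‖ ≤ ‖x‖⁻¹ * (‖x - y‖ + |‖y‖ - ‖x‖|) := by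
        rw [hsplit, norm_smul, norm_inv, norm_norm]
        gcongr
        refine (norm_add_le _ _).trans_eq ?_
        rw [norm_smul, norm_normalize hy0, mul_one, Real.norm_eq_abs]
    _ ≤ ‖x‖⁻¹ * (2 * ‖x - y‖) := by
        gcongr
        rw [abs_sub_comm]
        linarith [abs_norm_sub_norm_le x y]
    _ ≤ (m : ℝ)⁻¹ * (2 * ‖x - y‖) := by gcongr
    _ = ↑(2 / m) * ‖x - y‖ := by push_cast; ring

end NormedSpace

section HolderSphere

variable {d : ℕ} {α : ℝ} {f g h : EuclideanSpace ℝ (Fin d) → ℂ}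

lemma enorm_le_supNormSphere {x : EuclideanSpace ℝ (Fin d)} (hx : ‖x‖ = 1) :
    ‖f x‖ₑ ≤ supNormSphere f :=
  le_iSup₂_of_le (f := fun x (_ : ‖x‖ = 1) => (‖f x‖₊ : ℝ≥0∞)) x hx le_rfl

lemma enorm_sub_le_holderSeminormSphere {x y : EuclideanSpace ℝ (Fin d)} (hx : ‖x‖ = 1)
    (hy : ‖y‖ = 1) : ‖f x - f y‖ₑ ≤ holderSeminormSphere α f * edist x y ^ α := by
  rcases eq_or_ne x y with rfl | hxy
  · simp
  have hpos : edist x y ^ α ≠ 0 := (ENNReal.rpow_pos (edist_pos.2 hxy) (edist_ne_top x y)).ne'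
  have hfin : edist x y ^ α ≠ ⊤ := by simp [hxy]
  rw [← ENNReal.div_le_iff hpos hfin]
  exact le_iSup_of_le x <| le_iSup_of_le y <| le_iSup_of_le hx <| le_iSup_of_le hy <|
    le_iSup_of_le hxy le_rfl

lemma holderSeminormSphere_le {C : ℝ≥0∞}
    (hC : ∀ x y : EuclideanSpace ℝ (Fin d), ‖x‖ = 1 → ‖y‖ = 1 →
      ‖f x - f y‖ₑ ≤ C * edist x y ^ α) :
    holderSeminormSphere α f ≤ C :=
  iSup_le fun x => iSup_le fun y => iSup_le fun hx => iSup_le fun hy => iSup_le fun _ =>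
    ENNReal.div_le_of_le_mul (hC x y hx hy)

lemma supNormSphere_mul_le : supNormSphere (g * h) ≤ supNormSphere g * supNormSphere h :=
  iSup₂_le fun x hx => by
    rw [Pi.mul_apply, ← enorm_eq_nnnorm, enorm_mul]
    exact mul_le_mul' (enorm_le_supNormSphere hx) (enorm_le_supNormSphere hx)

lemma holderSeminormSphere_mul_le :
    holderSeminormSphere α (g * h) ≤
      supNormSphere g * holderSeminormSphere α h + holderSeminormSphere α g * supNormSphere h := by
  refine holderSeminormSphere_le fun x y hx hy => ?_
  have hsplit : (g * h) x - (g * h) y = g x * (h x - h y) + (g x - g y) * h y := by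
    simp only [Pi.mul_apply]; ring
  calc ‖(g * h) x - (g * h) y‖ₑ ≤ ‖g x‖ₑ * ‖h x - h y‖ₑ + ‖g x - g y‖ₑ * ‖h y‖ₑ := by
        rw [hsplit, ← enorm_mul, ← enorm_mul]; exact enorm_add_le _ _
    _ ≤ supNormSphere g * (holderSeminormSphere α h * edist x y ^ α) +
        holderSeminormSphere α g * edist x y ^ α * supNormSphere h := by
        gcongr
        exacts [enorm_le_supNormSphere hx, enorm_sub_le_holderSeminormSphere hx hy,
          enorm_sub_le_holderSeminormSphere hx hy, enorm_le_supNormSphere hy]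
    _ = _ := by ring

lemma holderNormSphere_mul_le :
    holderNormSphere α (g * h) ≤ holderNormSphere α g * holderNormSphere α h := by
  unfold holderNormSphere
  calc supNormSphere (g * h) + holderSeminormSphere α (g * h)
      ≤ supNormSphere g * supNormSphere h +
        (supNormSphere g * holderSeminormSphere α h +
          holderSeminormSphere α g * supNormSphere h) :=
        add_le_add supNormSphere_mul_le holderSeminormSphere_mul_le
    _ ≤ supNormSphere g * supNormSphere h +
        (supNormSphere g * holderSeminormSphere α h +
          holderSeminormSphere α g * supNormSphere h) +
        holderSeminormSphere α g * holderSeminormSphere α h := le_self_add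
    _ = _ := by ring

variable {u : EuclideanSpace ℝ (Fin d) → EuclideanSpace ℝ (Fin d)} {L : ℝ≥0}

lemma supNormSphere_comp_le (hu : MapsTo u (sphere 0 1) (sphere 0 1)) :
    supNormSphere (f ∘ u) ≤ supNormSphere f :=
  iSup₂_le fun _ hx =>
    enorm_le_supNormSphere (mem_sphere_zero_iff_norm.1 (hu (mem_sphere_zero_iff_norm.2 hx)))

lemma holderSeminormSphere_comp_le (hα : 0 ≤ α) (hu : MapsTo u (sphere 0 1) (sphere 0 1))
    (hL : LipschitzOnWith L u (sphere 0 1)) :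
    holderSeminormSphere α (f ∘ u) ≤ (L : ℝ≥0∞) ^ α * holderSeminormSphere α f := by
  refine holderSeminormSphere_le fun x y hx hy => ?_
  rw [← mem_sphere_zero_iff_norm] at hx hy
  calc ‖f (u x) - f (u y)‖ₑ ≤ holderSeminormSphere α f * edist (u x) (u y) ^ α :=
        enorm_sub_le_holderSeminormSphere (mem_sphere_zero_iff_norm.1 (hu hx))
          (mem_sphere_zero_iff_norm.1 (hu hy))
    _ ≤ holderSeminormSphere α f * (L * edist x y) ^ α := by gcongr; exact hL hx hy
    _ = (L : ℝ≥0∞) ^ α * holderSeminormSphere α f * edist x y ^ α := by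
        rw [ENNReal.mul_rpow_of_nonneg _ _ hα]; ring

lemma holderNormSphere_comp_le (hα : 0 ≤ α) (hu : MapsTo u (sphere 0 1) (sphere 0 1))
    (hL : LipschitzOnWith L u (sphere 0 1)) (hL1 : 1 ≤ L) :
    holderNormSphere α (f ∘ u) ≤ (L : ℝ≥0∞) ^ α * holderNormSphere α f := by
  have hLα : 1 ≤ (L : ℝ≥0∞) ^ α :=
    ENNReal.one_rpow α ▸ ENNReal.rpow_le_rpow (by exact_mod_cast hL1) hα
  calc holderNormSphere α (f ∘ u)
      ≤ supNormSphere f + (L : ℝ≥0∞) ^ α * holderSeminormSphere α f :=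
        add_le_add (supNormSphere_comp_le hu) (holderSeminormSphere_comp_le hα hu hL)
    _ ≤ (L : ℝ≥0∞) ^ α * holderNormSphere α f := by
        rw [holderNormSphere, mul_add]; gcongr; exact le_mul_of_one_le_left' hLα

/-- On the sphere, whose diameter is `2`, a Lipschitz function is `α`-Hölder for `α ≤ 1`. -/
lemma holderSeminormSphere_le_of_lipschitzOnWith (hα : α ≤ 1)
    (hg : LipschitzOnWith L g (sphere 0 1)) :
    holderSeminormSphere α g ≤ 2 ^ (1 - α) * L := by
  refine holderSeminormSphere_le fun x y hx hy => ?_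
  rcases eq_or_ne x y with rfl | hxy
  · simp
  have hdiam : edist x y ≤ 2 := by
    simpa using (edist_le_ofReal zero_le_two).2
      ((dist_le_norm_add_norm x y).trans_eq (by rw [hx, hy]; norm_num))
  rw [← mem_sphere_zero_iff_norm] at hx hy
  calc ‖g x - g y‖ₑ = edist (g x) (g y) := (edist_eq_enorm_sub _ _).symm
    _ ≤ L * edist x y := hg hx hy
    _ = L * (edist x y ^ (1 - α) * edist x y ^ α) := by
        rw [← ENNReal.rpow_add _ _ (edist_pos.2 hxy).ne' (edist_ne_top x y)]; simp
    _ ≤ L * (2 ^ (1 - α) * edist x y ^ α) := by gcongr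
    _ = 2 ^ (1 - α) * L * edist x y ^ α := by ring

lemma holderNormSphere_le_of_lipschitzOnWith (hα : α ≤ 1) {B : ℝ≥0}
    (hB : ∀ x : EuclideanSpace ℝ (Fin d), ‖x‖ = 1 → ‖g x‖ ≤ B)
    (hg : LipschitzOnWith L g (sphere 0 1)) :
    holderNormSphere α g ≤ B + 2 ^ (1 - α) * L := by
  refine add_le_add (iSup₂_le fun x hx => ?_) (holderSeminormSphere_le_of_lipschitzOnWith hα hg)
  exact_mod_cast hB x hx

end HolderSphere

section TwistFactor

variable {V W : Type*} [NormedAddCommGroup V] [NormedSpace ℝ V] [NormedAddCommGroup W]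
  [NormedSpace ℝ W]

noncomputable def twistFactor (q : ℂ) (A : V →L[ℝ] W) (x : V) : ℂ :=
  Complex.exp (q * (Real.log ‖A x‖ : ℂ))

variable {A : V →L[ℝ] W}

lemma mapsTo_normalize_comp_sphere {m : ℝ≥0} (hm : 0 < m)
    (hA : ∀ x ∈ sphere (0 : V) 1, (m : ℝ) ≤ ‖A x‖) :
    MapsTo (NormedSpace.normalize ∘ A) (sphere 0 1) (sphere 0 1) := fun x hx =>
  mem_sphere_zero_iff_norm.2 <| NormedSpace.norm_normalize <| norm_pos_iff.1 <|
    (NNReal.coe_pos.2 hm).trans_le (hA x hx)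

lemma lipschitzOnWith_normalize_comp {m : ℝ≥0} (hm : 0 < m)
    (hA : ∀ x ∈ sphere (0 : V) 1, (m : ℝ) ≤ ‖A x‖) :
    LipschitzOnWith (2 / m * ‖A‖₊) (NormedSpace.normalize ∘ A) (sphere 0 1) :=
  (NormedSpace.lipschitzOnWith_normalize hm).comp A.lipschitz.lipschitzOnWith hA

variable {q : ℂ} {η : ℝ≥0}

lemma mapsTo_mul_log_norm_sphere (hη : 0 < η)
    (hA : ∀ x ∈ sphere (0 : V) 1, (η : ℝ)⁻¹ ≤ ‖A x‖ ∧ ‖A x‖ ≤ η) :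
    MapsTo (fun x => q * (Real.log ‖A x‖ : ℂ)) (sphere 0 1)
      {z : ℂ | z.re ≤ |q.re| * Real.log η} := fun x hx => by
  change (q * (Real.log ‖A x‖ : ℂ)).re ≤ |q.re| * Real.log η
  rw [Complex.re_mul_ofReal]
  calc q.re * Real.log ‖A x‖ ≤ |q.re| * |Real.log ‖A x‖| := by
        rw [← abs_mul]; exact le_abs_self _
    _ ≤ |q.re| * Real.log η := by
        gcongr
        exact abs_log_le_log_of_inv_le_of_le (NNReal.coe_pos.2 hη) (hA x hx).1 (hA x hx).2

lemma norm_twistFactor_le (hη : 0 < η)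
    (hA : ∀ x ∈ sphere (0 : V) 1, (η : ℝ)⁻¹ ≤ ‖A x‖ ∧ ‖A x‖ ≤ η) {x : V}
    (hx : x ∈ sphere (0 : V) 1) :
    ‖twistFactor q A x‖ ≤ (η : ℝ) ^ |q.re| := by
  rw [twistFactor, Complex.norm_exp, Real.rpow_def_of_pos (NNReal.coe_pos.2 hη),
    mul_comm (Real.log _)]
  exact Real.exp_le_exp.2 (mapsTo_mul_log_norm_sphere hη hA hx)

lemma lipschitzOnWith_twistFactor (hη : 0 < η)
    (hA : ∀ x ∈ sphere (0 : V) 1, (η : ℝ)⁻¹ ≤ ‖A x‖ ∧ ‖A x‖ ≤ η) :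
    LipschitzOnWith (η ^ |q.re| * (‖q‖₊ * (η * ‖A‖₊))) (twistFactor q A) (sphere 0 1) := by
  have hlog : LipschitzOnWith (η * ‖A‖₊) (fun x => Real.log ‖A x‖) (sphere (0 : V) 1) := by
    have h := (Real.lipschitzOnWith_log (inv_pos.2 hη)).comp
      (lipschitzWith_one_norm.comp A.lipschitz).lipschitzOnWith
      fun x hx => by simpa using (hA x hx).1
    rw [inv_inv, one_mul] at h
    exact h
  have hexp : (Real.exp (|q.re| * Real.log η)).toNNReal = η ^ |q.re| := by
    rw [← NNReal.coe_inj, Real.coe_toNNReal _ (Real.exp_pos _).le, NNReal.coe_rpow,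
      Real.rpow_def_of_pos (NNReal.coe_pos.2 hη), mul_comm]
  exact hexp ▸ (Complex.lipschitzOnWith_exp _).comp
    ((lipschitzWith_mul_ofReal q).comp_lipschitzOnWith hlog) (mapsTo_mul_log_norm_sphere hη hA)

end TwistFactor

section TwistKernel

variable {d : ℕ}

lemma twistKernel_eq_twistFactor_mul_comp (q : ℂ)
    (A : EuclideanSpace ℝ (Fin d) →L[ℝ] EuclideanSpace ℝ (Fin d))
    (f : EuclideanSpace ℝ (Fin d) → ℂ) :
    twistKernel q A f = twistFactor q A * (f ∘ NormedSpace.normalize ∘ A) :=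
  rfl

variable {α : ℝ} {q : ℂ} {η : ℝ≥0} {A : EuclideanSpace ℝ (Fin d) →L[ℝ] EuclideanSpace ℝ (Fin d)}

lemma holderNormSphere_twistFactor_le (hα : α ≤ 1) (hη : 0 < η)
    (hA : ∀ x ∈ sphere (0 : EuclideanSpace ℝ (Fin d)) 1, (η : ℝ)⁻¹ ≤ ‖A x‖ ∧ ‖A x‖ ≤ η)
    (hAη : ‖A‖₊ ≤ η) :
    holderNormSphere α (twistFactor q A) ≤
      ((η ^ |q.re| + 2 ^ (1 - α) * (η ^ |q.re| * (‖q‖₊ * (η * η))) : ℝ≥0) : ℝ≥0∞) := by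
  refine (holderNormSphere_le_of_lipschitzOnWith (B := η ^ |q.re|) hα
    (fun x hx => (NNReal.coe_rpow η _).symm ▸ norm_twistFactor_le hη hA
      (mem_sphere_zero_iff_norm.2 hx))
    ((lipschitzOnWith_twistFactor hη hA).weaken (K' := η ^ |q.re| * (‖q‖₊ * (η * η)))
      (by gcongr))).trans_eq ?_
  simp only [ENNReal.coe_add, ENNReal.coe_mul, ENNReal.coe_rpow_of_ne_zero two_ne_zero,
    ENNReal.coe_ofNat]

lemma holderNormSphere_comp_normalize_le (hα : 0 ≤ α) (hη : 1 ≤ η)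
    (hA : ∀ x ∈ sphere (0 : EuclideanSpace ℝ (Fin d)) 1, (η : ℝ)⁻¹ ≤ ‖A x‖)
    (hAη : ‖A‖₊ ≤ η) (f : EuclideanSpace ℝ (Fin d) → ℂ) :
    holderNormSphere α (f ∘ NormedSpace.normalize ∘ A) ≤
      ((2 * η * η) ^ α : ℝ≥0) * holderNormSphere α f := by
  have hη0 : 0 < η⁻¹ := inv_pos.2 (zero_lt_one.trans_le hη)
  have hAlow : ∀ x ∈ sphere (0 : EuclideanSpace ℝ (Fin d)) 1, ((η⁻¹ : ℝ≥0) : ℝ) ≤ ‖A x‖ :=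
    fun x hx => by simpa using hA x hx
  rw [ENNReal.coe_rpow_of_nonneg _ hα]
  exact holderNormSphere_comp_le hα (mapsTo_normalize_comp_sphere hη0 hAlow)
    ((lipschitzOnWith_normalize_comp hη0 hAlow).weaken (by rw [div_inv_eq_mul]; gcongr))
    (one_le_mul (one_le_mul one_le_two hη) hη)

end TwistKernel

theorem twist_kernel_operator_bounded_general
    {d : ℕ} (q : ℂ) (α : ℝ) (hα0 : 0 < α) (hα1 : α ≤ 1) (η : ℝ) (hη : 1 ≤ η)
    (S : Set (EuclideanSpace ℝ (Fin d) →L[ℝ] EuclideanSpace ℝ (Fin d)))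
    (hSnorm : ∀ A ∈ S, ‖A‖ ≤ η)
    (hSinv : ∀ A ∈ S, ∀ x : EuclideanSpace ℝ (Fin d), ‖x‖ = 1 → η⁻¹ ≤ ‖A x‖ ∧ ‖A x‖ ≤ η) :
    ∃ C : ℝ≥0, 0 < C ∧ ∀ A ∈ S, ∀ f : EuclideanSpace ℝ (Fin d) → ℂ,
      holderNormSphere α (twistKernel q A f) ≤ (C : ℝ≥0∞) * holderNormSphere α f := by
  lift η to ℝ≥0 using zero_le_one.trans hη
  have hη1 : 1 ≤ η := by exact_mod_cast hη
  have hη0 : 0 < η := zero_lt_one.trans_le hη1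
  refine ⟨(η ^ |q.re| + 2 ^ (1 - α) * (η ^ |q.re| * (‖q‖₊ * (η * η)))) * (2 * η * η) ^ α,
    by positivity, fun A hA f => ?_⟩
  have hAs : ∀ x ∈ sphere (0 : EuclideanSpace ℝ (Fin d)) 1, (η : ℝ)⁻¹ ≤ ‖A x‖ ∧ ‖A x‖ ≤ η :=
    fun x hx => hSinv A hA x (mem_sphere_zero_iff_norm.1 hx)
  have hAη : ‖A‖₊ ≤ η := hSnorm A hA
  rw [twistKernel_eq_twistFactor_mul_comp, ENNReal.coe_mul, mul_assoc]
  exact holderNormSphere_mul_le.trans (mul_le_mul'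
    (holderNormSphere_twistFactor_le hα1 hη0 hAs hAη)
    (holderNormSphere_comp_normalize_le hα0.le hη1 (fun x hx => (hAs x hx).1) hAη f))

/-- For fixed `q ∈ ℂ` and `α ∈ (0,1]` there is a constant `C(q,η) > 0` such that for every
`A` in a compact set `S ⊂ GL(d,ℝ)` with uniform bound `η` on `‖A‖` and `‖A⁻¹‖`, the twisted
composition operator `K_{q,A}` maps `C^α(𝕊^{d-1})` to itself with
`‖K_{q,A} f‖_{C^α} ≤ C(q,η) ‖f‖_{C^α}`. -/
theorem twist_kernel_operator_bounded
    {d : ℕ} (q : ℂ) (α : ℝ) (hα0 : 0 < α) (hα1 : α ≤ 1) (η : ℝ) (hη : 1 ≤ η)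
    (S : Set (EuclideanSpace ℝ (Fin d) →L[ℝ] EuclideanSpace ℝ (Fin d)))
    (hS : IsCompact S)
    (hSnorm : ∀ A ∈ S, ‖A‖ ≤ η)
    (hSinv : ∀ A ∈ S, ∀ x : EuclideanSpace ℝ (Fin d), ‖x‖ = 1 → η⁻¹ ≤ ‖A x‖ ∧ ‖A x‖ ≤ η) :
    ∃ C : ℝ≥0, 0 < C ∧ ∀ A ∈ S, ∀ f : EuclideanSpace ℝ (Fin d) → ℂ,
      holderNormSphere α (twistKernel q A f) ≤ (C : ℝ≥0∞) * holderNormSphere α f :=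
  twist_kernel_operator_bounded_general q α hα0 hα1 η hη S hSnorm hSinv
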